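/- arXiv:2501.09286 — 2 statements merged into one kernel-verified Lean document; each statement's English description precedes it below -/
import Mathlib

section
/- Let n be a natural number and let g be a permutation of a finite set with n elements. Then s(g) = n - c(g); that is, the least number of transpositions whose product equals g is exactly n minus the number of orbits of g. -/
/-!
A function that is constant on the orbits of `f` and takes the same value at `x` and `y` is also
constant on the orbits of `swap x y * f`. Applied to the orbit map of `f` with the orbits of `x`
and `y` identified, this shows that a transposition lowers the number of orbits by at most one;
as the identity has `n` orbits, `n - c(g) ≤ s(g)`. Applied to the orbit map of `f` itself with
`y = f x ≠ x`, it shows that the orbits of `swap x (f x) * f` refine those of `f`, strictly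
because `x` becomes a fixed point; induction on `n - c(g)` then writes `g` as a product of
`n - c(g)` transpositions.
-/

/-- `swapDist g` is the least number of transpositions whose product equals `g`. -/
noncomputable def swapDist {α : Type*} [Fintype α] [DecidableEq α] (g : Equiv.Perm α) : ℕ :=
  sInf {k | ∃ l : List (Equiv.Perm α), l.length = k ∧ (∀ τ ∈ l, τ.IsSwap) ∧ l.prod = g}

/-- `cycleCount g` is the number of orbits of the cyclic subgroup generated by `g`
(counting each fixed point as a 1-cycle). -/
noncomputable def cycleCount {α : Type*} [Fintype α] [DecidableEq α] (g : Equiv.Perm α) : ℕ :=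
  Nat.card (MulAction.orbitRel.Quotient (Subgroup.zpowers g) α)

open Equiv Equiv.Perm

theorem Nat.card_le_card_range_update_id_add_one {Q : Type*} [Finite Q] [DecidableEq Q]
    (c d : Q) : Nat.card Q ≤ Nat.card (Set.range (Function.update id c d)) + 1 := by
  have hsub : Set.univ \ {c} ⊆ Set.range (Function.update id c d) := fun q hq =>
    ⟨q, Function.update_of_ne hq.2 _ _⟩
  rw [← Set.ncard_univ, ← Set.ncard_sdiff_singleton_add_one (Set.mem_univ c),
    Nat.card_coe_set_eq]
  exact Nat.add_le_add_right (Set.ncard_le_ncard hsub) 1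

theorem Equiv.comp_swap_eq_self {α β : Type*} [DecidableEq α] {φ : α → β} {x y : α}
    (h : φ x = φ y) : φ ∘ swap x y = φ := by
  rw [comp_swap_eq_update, h, Function.update_eq_self, ← h, Function.update_eq_self]

namespace Equiv.Perm

variable {α β : Type*} {φ : α → β} {f : Perm α}

theorem comp_swap_mul_eq_self [DecidableEq α] {x y : α} (hf : φ ∘ f = φ) (hxy : φ x = φ y) :
    φ ∘ (swap x y * f) = φ := by
  rw [coe_mul, ← Function.comp_assoc, comp_swap_eq_self hxy, hf]

theorem comp_zpow_eq_self (hf : φ ∘ f = φ) (i : ℤ) : φ ∘ ⇑(f ^ i) = φ := by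
  induction i using Int.induction_on with
  | zero => rfl
  | succ i ih => rw [zpow_add_one, coe_mul, ← Function.comp_assoc, ih, hf]
  | pred i ih =>
    rw [zpow_sub_one, coe_mul, ← Function.comp_assoc, ih]
    nth_rw 1 [← hf]
    rw [Function.comp_assoc, ← coe_mul, mul_inv_cancel, coe_one, Function.comp_id]

theorem SameCycle.apply_eq_of_comp_eq (hf : φ ∘ f = φ) {a b : α} (h : f.SameCycle a b) :
    φ a = φ b := by
  obtain ⟨i, rfl⟩ := h
  exact (congrFun (comp_zpow_eq_self hf i) a).symm

theorem SameCycle.surjective_lift_rangeFactorization (hf : φ ∘ f = φ) :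
    Function.Surjective (Quotient.lift (s := SameCycle.setoid f) (Set.rangeFactorization φ)
      fun _ _ h => Subtype.ext (h.apply_eq_of_comp_eq hf)) :=
  Quotient.lift_surjective _ _ Set.rangeFactorization_surjective

theorem orbitRel_zpowers_eq_sameCycle_setoid (f : Perm α) :
    MulAction.orbitRel (Subgroup.zpowers f) α = SameCycle.setoid f := by
  ext a b
  show _ ↔ f.SameCycle a b
  rw [MulAction.orbitRel_apply, MulAction.mem_orbit_iff, sameCycle_comm]
  constructor
  · rintro ⟨⟨_, i, rfl⟩, rfl⟩
    exact ⟨i, rfl⟩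
  · rintro ⟨i, rfl⟩
    exact ⟨⟨f ^ i, i, rfl⟩, rfl⟩

end Equiv.Perm

section CycleCount

variable {α : Type*} [Fintype α] [DecidableEq α]

theorem cycleCount_eq_card_quotient_sameCycle (f : Perm α) :
    cycleCount f = Nat.card (Quotient (SameCycle.setoid f)) := by
  rw [cycleCount, MulAction.orbitRel.Quotient, orbitRel_zpowers_eq_sameCycle_setoid]

theorem cycleCount_le_card (f : Perm α) : cycleCount f ≤ Fintype.card α := by
  rw [cycleCount_eq_card_quotient_sameCycle, ← Nat.card_eq_fintype_card]
  exact Nat.card_le_card_of_surjective _ Quotient.mk_surjective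

section Invariant

variable {β : Type*} {φ : α → β} {f : Perm α}

theorem card_range_le_cycleCount (hf : φ ∘ f = φ) : Nat.card (Set.range φ) ≤ cycleCount f := by
  rw [cycleCount_eq_card_quotient_sameCycle]
  exact Nat.card_le_card_of_surjective _ (SameCycle.surjective_lift_rangeFactorization hf)

theorem card_range_lt_cycleCount (hf : φ ∘ f = φ) {a b : α} (hab : φ a = φ b)
    (hne : ¬ f.SameCycle a b) : Nat.card (Set.range φ) < cycleCount f := by
  refine (card_range_le_cycleCount hf).lt_of_ne fun h => ?_
  rw [cycleCount_eq_card_quotient_sameCycle] at h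
  have hbij := (Nat.bijective_iff_surjective_and_card _).mpr
    ⟨SameCycle.surjective_lift_rangeFactorization hf, h.symm⟩
  exact hne (Quotient.exact (hbij.1 (Subtype.ext hab)))

end Invariant

theorem cycleCount_one : cycleCount (1 : Perm α) = Fintype.card α := by
  refine (cycleCount_le_card 1).antisymm ?_
  have := card_range_le_cycleCount (φ := (id : α → α)) (f := 1) rfl
  rwa [Set.range_id, Nat.card_univ, Nat.card_eq_fintype_card] at this

theorem cycleCount_le_cycleCount_swap_mul_add_one (f : Perm α) (x y : α) :
    cycleCount f ≤ cycleCount (swap x y * f) + 1 := by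
  classical
  let mk := Quotient.mk (SameCycle.setoid f)
  have hmk : mk ∘ f = mk := funext fun a => Quotient.sound (sameCycle_apply_left.mpr .rfl)
  let merge := Function.update id (mk y) (mk x)
  have hmerge : merge (mk x) = merge (mk y) := by
    by_cases h : mk x = mk y <;> simp [merge, h]
  have hinv : (merge ∘ mk) ∘ (swap x y * f) = merge ∘ mk :=
    comp_swap_mul_eq_self (by rw [Function.comp_assoc, hmk]) hmerge
  calc cycleCount f = Nat.card (Quotient (SameCycle.setoid f)) :=
        cycleCount_eq_card_quotient_sameCycle f
    _ ≤ Nat.card (Set.range merge) + 1 := Nat.card_le_card_range_update_id_add_one _ _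
    _ = Nat.card (Set.range (merge ∘ mk)) + 1 := by rw [Quotient.mk_surjective.range_comp]
    _ ≤ cycleCount (swap x y * f) + 1 := by gcongr; exact card_range_le_cycleCount hinv

theorem cycleCount_lt_cycleCount_swap_mul {f : Perm α} {x : α} (hx : f x ≠ x) :
    cycleCount f < cycleCount (swap x (f x) * f) := by
  let mk := Quotient.mk (SameCycle.setoid f)
  have hmk : mk ∘ f = mk := funext fun a => Quotient.sound (sameCycle_apply_left.mpr .rfl)
  have hx_fx : mk x = mk (f x) := Quotient.sound (sameCycle_apply_right.mpr .rfl)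
  have hfix : (swap x (f x) * f) x = x := by simp
  have := card_range_lt_cycleCount (comp_swap_mul_eq_self hmk hx_fx) hx_fx
    fun h => hx (h.eq_of_left hfix).symm
  rwa [Set.range_eq_univ.mpr Quotient.mk_surjective, Nat.card_univ,
    ← cycleCount_eq_card_quotient_sameCycle] at this

end CycleCount

section SwapDist

variable {α : Type*} [Fintype α] [DecidableEq α]

theorem card_sub_cycleCount_prod_le_length {l : List (Perm α)} (hl : ∀ τ ∈ l, τ.IsSwap) :
    Fintype.card α - cycleCount l.prod ≤ l.length := by
  induction l with
  | nil => simp [cycleCount_one]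
  | cons τ l ih =>
    obtain ⟨x, y, -, rfl⟩ := hl τ List.mem_cons_self
    have hstep := cycleCount_le_cycleCount_swap_mul_add_one l.prod x y
    have hl' := ih fun σ hσ => hl σ (List.mem_cons_of_mem _ hσ)
    rw [List.prod_cons, List.length_cons]
    omega

theorem exists_isSwap_list_prod_eq (g : Perm α) :
    ∃ l : List (Perm α), l.length ≤ Fintype.card α - cycleCount g ∧
      (∀ τ ∈ l, τ.IsSwap) ∧ l.prod = g := by
  induction hm : Fintype.card α - cycleCount g using Nat.strong_induction_on generalizing g with
  | _ m ih =>
  by_cases hg : g = 1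
  · exact ⟨[], by simp, by simp, hg.symm⟩
  obtain ⟨x, hx⟩ : ∃ x, g x ≠ x := not_forall.mp fun h => hg (Equiv.ext h)
  have hlt := cycleCount_lt_cycleCount_swap_mul hx
  have hle := cycleCount_le_card (swap x (g x) * g)
  obtain ⟨l, hlen, hswap, hprod⟩ := ih _ (by omega) (swap x (g x) * g) rfl
  refine ⟨swap x (g x) :: l, by simp only [List.length_cons]; omega, ?_, ?_⟩
  · simpa using ⟨⟨x, g x, hx.symm, rfl⟩, hswap⟩
  · rw [List.prod_cons, hprod, swap_mul_self_mul]

end SwapDist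

theorem swapDist_eq_card_sub_cycleCount {α : Type*} [Fintype α] [DecidableEq α]
    (n : ℕ) (hn : Fintype.card α = n) (g : Equiv.Perm α) :
    swapDist g = n - cycleCount g := by
  subst hn
  obtain ⟨l, hlen, hswap, hprod⟩ := exists_isSwap_list_prod_eq g
  have hmem : l.length ∈
      {k | ∃ l : List (Perm α), l.length = k ∧ (∀ τ ∈ l, τ.IsSwap) ∧ l.prod = g} :=
    ⟨l, rfl, hswap, hprod⟩
  apply le_antisymm
  · exact (Nat.sInf_le hmem).trans hlen
  · refine le_csInf ⟨_, hmem⟩ ?_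
    rintro _ ⟨l', rfl, hswap', rfl⟩
    exact card_sub_cycleCount_prod_le_length hswap'
end

section
/- For every n ≥ 1, the sum over all permutations g in S_n of s(g), the least number of transpositions whose product is g, equals n! · (n - H_n); consequently, the average value of s(g) for a uniformly random permutation of n points is n - H_n. -/
/-!
Write `c(g)` for the number of cycles of `g`, fixed points included, so `c(1) = n`.
Multiplying by a transposition changes `c` by at most one, so a product of `k` transpositions has
`c ≥ n - k`; conversely, splitting a moved point `x` off its cycle with `swap x (g x)` raises `c` by
exactly one. Hence `s(g) = n - c(g)`. Writing a permutation of `Option α` as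
`swap none a * e.optionCongr` with `e ∈ Perm α`, the point `a = none` adds a fixed point and
`a ≠ none` inserts it into a cycle of `e`, so `∑ c` over `S_{n+1}` is `(n + 1) ∑ c` over `S_n`
plus `n!`, which gives `∑ c = n! Hₙ`.
-/

open Equiv Equiv.Perm Nat

theorem Finite.card_lt_of_surjective_not_injective {α β : Type*} [Finite α] (f : α → β)
    (hf : Function.Surjective f) (hf' : ¬ Function.Injective f) : Nat.card β < Nat.card α := by
  have : Finite β := Finite.of_surjective f hf
  have := Fintype.ofFinite α
  have := Fintype.ofFinite β
  simpa only [Nat.card_eq_fintype_card] using Fintype.card_lt_of_surjective_not_injective f hf hf'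

theorem Equiv.apply_swap_apply_of_apply_eq {α β : Type*} [DecidableEq α] {f : α → β} {x y : α}
    (hxy : f x = f y) (z : α) : f (swap x y z) = f z := by
  rcases eq_or_ne z x with rfl | hzx
  · rw [swap_apply_left, hxy]
  rcases eq_or_ne z y with rfl | hzy
  · rw [swap_apply_right, hxy]
  rw [swap_apply_of_ne_of_ne hzx hzy]

namespace Equiv.Perm

variable {α β : Type*}

theorem SameCycle.apply_eq_of_forall_apply_eq {g : Perm α} {f : α → β} (hf : ∀ x, f (g x) = f x)
    {x y : α} (hxy : g.SameCycle x y) : f x = f y := by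
  obtain ⟨i, rfl⟩ := hxy
  induction i using Int.induction_on generalizing x with
  | zero => simp
  | succ k ih => rw [zpow_add_one, mul_apply, ← ih, hf]
  | pred k ih =>
    rw [zpow_sub_one, mul_apply, ← ih, ← hf (g⁻¹ x), ← mul_apply, mul_inv_cancel, one_apply]

theorem sameCycle_permCongr {e : α ≃ β} {g : Perm α} {x y : α} :
    (e.permCongr g).SameCycle (e x) (e y) ↔ g.SameCycle x y := by
  have hpow (i : ℤ) : e.permCongr g ^ i = e.permCongr (g ^ i) :=
    (map_zpow e.permCongrHom g i).symm
  simp [SameCycle, hpow]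

/-- Fixed points count as cycles. -/
noncomputable def numCycles (g : Perm α) : ℕ := Nat.card (Quotient (SameCycle.setoid g))

theorem sameCycle_quotient_mk_apply (g : Perm α) (x : α) :
    Quotient.mk (SameCycle.setoid g) (g x) = Quotient.mk _ x :=
  Quotient.sound (sameCycle_apply_left.2 (SameCycle.refl g x))

theorem numCycles_one : numCycles (1 : Perm α) = Nat.card α :=
  (Nat.card_eq_of_bijective (Quotient.mk _)
    ⟨fun _ _ h => sameCycle_one.1 (Quotient.exact h), Quotient.mk_surjective⟩).symm

theorem numCycles_permCongr (e : α ≃ β) (g : Perm α) : numCycles (e.permCongr g) = numCycles g :=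
  Nat.card_congr (Quotient.congr e fun _ _ => sameCycle_permCongr.symm).symm

variable [Finite α]

theorem numCycles_optionCongr (e : Perm α) : numCycles e.optionCongr = numCycles e + 1 := by
  let F : Quotient (SameCycle.setoid e.optionCongr) → Option (Quotient (SameCycle.setoid e)) :=
    Quotient.lift (Option.map (Quotient.mk _)) fun _ _ h => h.apply_eq_of_forall_apply_eq fun
      | none => rfl
      | some x => congrArg some (sameCycle_quotient_mk_apply e x)
  let G : Option (Quotient (SameCycle.setoid e)) → Quotient (SameCycle.setoid e.optionCongr) :=
    fun o => o.elim (Quotient.mk _ none) (Quotient.lift (Quotient.mk _ ∘ some) fun _ _ h =>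
      h.apply_eq_of_forall_apply_eq fun x => sameCycle_quotient_mk_apply e.optionCongr (some x))
  have hF : Function.Surjective F := by
    rintro (_ | ⟨⟨x⟩⟩)
    exacts [⟨Quotient.mk _ none, rfl⟩, ⟨Quotient.mk _ (some x), rfl⟩]
  have hG : Function.Surjective G := by
    rintro ⟨_ | x⟩
    exacts [⟨none, rfl⟩, ⟨some (Quotient.mk _ x), rfl⟩]
  have := Nat.card_le_card_of_surjective F hF
  have := Nat.card_le_card_of_surjective G hG
  rw [Finite.card_option] at *
  unfold numCycles
  omega

variable [DecidableEq α]

theorem numCycles_le_numCycles_swap_mul_add_one (h : Perm α) (a b : α) :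
    numCycles h ≤ numCycles (swap a b * h) + 1 := by
  classical
  let mk := Quotient.mk (SameCycle.setoid h)
  -- `merge` is constant on the cycles of `swap a b * h`
  -- and hits every cycle of `h` except possibly that of `b`
  let merge (x : α) : Quotient (SameCycle.setoid h) := if mk x = mk b then mk a else mk x
  have merge_swap : ∀ x, merge (swap a b x) = merge x :=
    apply_swap_apply_of_apply_eq (by simp only [merge, if_pos rfl]; split_ifs <;> rfl)
  have merge_apply (x : α) : merge (h x) = merge x := by
    simp only [merge, mk, sameCycle_quotient_mk_apply]
  let F : Option (Quotient (SameCycle.setoid (swap a b * h))) → Quotient (SameCycle.setoid h) :=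
    fun o => o.elim (mk b) (Quotient.lift merge fun _ _ hxy =>
      hxy.apply_eq_of_forall_apply_eq fun x => by rw [mul_apply, merge_swap, merge_apply])
  have hF : Function.Surjective F := by
    rintro ⟨x⟩
    by_cases hx : mk x = mk b
    · exact ⟨none, hx.symm⟩
    · exact ⟨some (Quotient.mk _ x), if_neg hx⟩
  simpa [numCycles, Finite.card_option] using Nat.card_le_card_of_surjective F hF

theorem numCycles_swap_mul_add_one_of_apply_eq {h : Perm α} {x y : α} (hx : h x = x)
    (hy : y ≠ x) : numCycles (swap x y * h) + 1 = numCycles h := by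
  have hxy : Quotient.mk (SameCycle.setoid (swap x y * h)) x = Quotient.mk _ y :=
    Quotient.sound ⟨1, by simp [hx]⟩
  have mk_apply (u : α) :
      Quotient.mk (SameCycle.setoid (swap x y * h)) (h u) = Quotient.mk _ u := by
    rw [show h u = swap x y ((swap x y * h) u) by simp, apply_swap_apply_of_apply_eq hxy,
      sameCycle_quotient_mk_apply]
  let F : Quotient (SameCycle.setoid h) → Quotient (SameCycle.setoid (swap x y * h)) :=
    Quotient.lift (Quotient.mk _) fun _ _ huv => huv.apply_eq_of_forall_apply_eq mk_apply
  have hF : Function.Surjective F := Quotient.lift_surjective _ _ Quotient.mk_surjective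
  have hF' : ¬ Function.Injective F := fun hinj =>
    hy (Quotient.exact (hinj hxy) |>.eq_of_left hx).symm
  have := Finite.card_lt_of_surjective_not_injective F hF hF'
  have := numCycles_le_numCycles_swap_mul_add_one h x y
  unfold numCycles at *
  omega

theorem card_le_length_add_numCycles_prod {l : List (Perm α)} (hl : ∀ τ ∈ l, τ.IsSwap) :
    Nat.card α ≤ l.length + numCycles l.prod := by
  induction l with
  | nil => simp [numCycles_one]
  | cons τ l ih =>
    obtain ⟨a, b, -, rfl⟩ := hl τ List.mem_cons_self
    have := ih fun σ hσ => hl σ (List.mem_cons_of_mem _ hσ)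
    have := numCycles_le_numCycles_swap_mul_add_one l.prod a b
    rw [List.prod_cons, List.length_cons]
    omega

theorem exists_swap_list_length_add_numCycles (g : Perm α) :
    ∃ l : List (Perm α), (∀ τ ∈ l, τ.IsSwap) ∧ l.prod = g ∧
      l.length + numCycles g = Nat.card α := by
  have := Fintype.ofFinite α
  induction hn : g.support.card using Nat.strong_induction_on generalizing g with
  | _ n ih =>
  rcases eq_or_ne g 1 with rfl | hg
  · exact ⟨[], by simp, rfl, by simp [numCycles_one]⟩
  obtain ⟨x, hx⟩ : ∃ x, g x ≠ x := not_forall.1 fun h => hg (Equiv.ext h)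
  have hsplit : numCycles g + 1 = numCycles (swap x (g x) * g) := by
    conv_lhs => rw [← swap_mul_self_mul x (g x) g]
    exact numCycles_swap_mul_add_one_of_apply_eq (by simp) hx
  obtain ⟨l, hl, hprod, hlen⟩ := ih _ (hn ▸ card_support_swap_mul hx) _ rfl
  refine ⟨swap x (g x) :: l, ?_, ?_, ?_⟩
  · exact List.forall_mem_cons.2 ⟨⟨x, g x, hx.symm, rfl⟩, hl⟩
  · rw [List.prod_cons, hprod, swap_mul_self_mul]
  · rw [List.length_cons]
    omega

end Equiv.Perm

theorem swapDist_add_numCycles {α : Type*} [Fintype α] [DecidableEq α] (g : Perm α) :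
    swapDist g + numCycles g = Fintype.card α := by
  obtain ⟨l, hl, rfl, hlen⟩ := exists_swap_list_length_add_numCycles g
  obtain ⟨l', hlen', hl', hprod'⟩ := Nat.sInf_mem (⟨l.length, l, rfl, hl, rfl⟩ :
    {k | ∃ l' : List (Perm α), l'.length = k ∧ (∀ τ ∈ l', τ.IsSwap) ∧ l'.prod = l.prod}.Nonempty)
  have hle : swapDist l.prod ≤ l.length := Nat.sInf_le ⟨l, rfl, hl, rfl⟩
  have hge := card_le_length_add_numCycles_prod hl'
  rw [hprod', hlen'] at hge
  rw [← Nat.card_eq_fintype_card]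
  unfold swapDist at *
  omega

namespace Equiv.Perm

variable {α : Type*} [Fintype α] [DecidableEq α]

theorem sum_numCycles_option :
    ∑ σ : Perm (Option α), numCycles σ =
      (Fintype.card α + 1) * ∑ e : Perm α, numCycles e + (Fintype.card α)! := by
  -- `decomposeOption` writes `σ` as `swap none a * e.optionCongr`
  have h_some (x : α) (e : Perm α) :
      numCycles (swap none (some x) * e.optionCongr) = numCycles e := by
    have := numCycles_swap_mul_add_one_of_apply_eq (h := e.optionCongr) rfl (Option.some_ne_none x)
    rw [numCycles_optionCongr] at this
    omega
  rw [← decomposeOption.symm.sum_comp, Fintype.sum_prod_type, Fintype.sum_option]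
  simp only [decomposeOption_symm_apply, swap_self, ← one_def, one_mul, numCycles_optionCongr,
    h_some, Finset.sum_add_distrib, Finset.sum_const, Finset.card_univ, Fintype.card_perm,
    smul_eq_mul]
  ring

theorem sum_numCycles_eq_factorial_mul_harmonic :
    ∑ g : Perm α, (numCycles g : ℚ) = (Fintype.card α)! * harmonic (Fintype.card α) := by
  induction hn : Fintype.card α generalizing α with
  | zero =>
    have := Fintype.card_eq_zero_iff.1 hn
    simp [Subsingleton.elim _ (1 : Perm α), numCycles_one]
  | succ n ih =>
    obtain ⟨a⟩ : Nonempty α := Fintype.card_pos_iff.1 (hn ▸ n.succ_pos)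
    let e := optionSubtypeNe a
    have hcard : Fintype.card {b // b ≠ a} = n := by
      have := Fintype.card_congr e
      rw [Fintype.card_option, hn] at this
      omega
    calc ∑ g : Perm α, (numCycles g : ℚ)
        = ∑ σ : Perm (Option {b // b ≠ a}), (numCycles σ : ℚ) := by
          rw [← e.permCongr.sum_comp]
          simp only [numCycles_permCongr]
      _ = (n + 1) * (n ! * harmonic n) + n ! := by
          rw [← ih hcard]
          exact_mod_cast (hcard ▸ sum_numCycles_option)
      _ = (n + 1)! * harmonic (n + 1) := by
          rw [harmonic_succ, factorial_succ]
          push_cast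
          field_simp

end Equiv.Perm

theorem sum_swapDist_eq_factorial_mul_sub_harmonic_general {α : Type*} [Fintype α] [DecidableEq α]
    (n : ℕ) (hn : Fintype.card α = n) :
    (∑ g : Equiv.Perm α, (swapDist g : ℚ)) =
        (n.factorial : ℚ) * ((n : ℚ) - ∑ k ∈ Finset.range n, (1 : ℚ) / (k + 1)) ∧
      (∑ g : Equiv.Perm α, (swapDist g : ℚ)) / (n.factorial : ℚ) =
        (n : ℚ) - ∑ k ∈ Finset.range n, (1 : ℚ) / (k + 1) := by
  have hH : ∑ k ∈ Finset.range n, (1 : ℚ) / (k + 1) = harmonic n := by simp [harmonic]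
  have hsum : ∑ g : Perm α, (swapDist g : ℚ) = n ! * (n - harmonic n) := by
    have hdist (g : Perm α) : (swapDist g : ℚ) = n - numCycles g := by
      rw [← hn, ← swapDist_add_numCycles g]
      push_cast
      ring
    simp only [hdist, Finset.sum_sub_distrib, sum_numCycles_eq_factorial_mul_harmonic, hn]
    simp [Fintype.card_perm, hn]
    ring
  rw [hH, hsum]
  exact ⟨rfl, by field_simp⟩

/-- The total of the minimal numbers of transpositions over all permutations of `n` points
is `n! · (n - Hₙ)`; hence the average value of `s(g)` is `n - Hₙ`. -/
theorem sum_swapDist_eq_factorial_mul_sub_harmonic {α : Type*} [Fintype α] [DecidableEq α]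
    (n : ℕ) (hn : Fintype.card α = n) (hpos : 1 ≤ n) :
    (∑ g : Equiv.Perm α, (swapDist g : ℚ)) =
        (n.factorial : ℚ) * ((n : ℚ) - ∑ k ∈ Finset.range n, (1 : ℚ) / (k + 1)) ∧
      (∑ g : Equiv.Perm α, (swapDist g : ℚ)) / (n.factorial : ℚ) =
        (n : ℚ) - ∑ k ∈ Finset.range n, (1 : ℚ) / (k + 1) :=
  sum_swapDist_eq_factorial_mul_sub_harmonic_general n hn
end
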